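/- Let $x_1, \dots, x_D, x_q$ be i.i.d. $N(0, I_d)$ in $\mathbb{R}^d$ and $\theta \in \mathbb{R}^d$ fixed with $\|\theta\| \le 1$. Let $\epsilon = \sum_{i \ne j} w_{ij} (\theta^\top x_i)(x_j^\top x_q)$ where the real weights satisfy $|w_{ij}| \le \frac{2}{2\min(i,j) + \max(i,j) - 2}$. Then $\mathbb{E}[\epsilon] = 0$ and $\mathbb{E}[\epsilon^2] \le C d \log(D)$ for an absolute constant $C$. -/

import Mathlib

/-
Conditionally on `x_q = u`, the cross term is an off-diagonal sum `∑_{i ≠ j} w i j f(x_i) g(x_j)`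
of the centred functions `f = θ ⬝ᵥ ·` and `g = u ⬝ᵥ ·` of i.i.d. vectors. Such a sum has mean
zero, and in its second moment a product `f(x_i) g(x_j) f(x_k) g(x_l)` survives only when
`(k, l) = (i, j)` or `(k, l) = (j, i)`: otherwise some index occurs once and its factor integrates
to zero. Hence `𝔼[ε² | x_q = u] = (∑ w i j ²) ‖θ‖² ‖u‖² + (∑ w i j w j i) (θ ⬝ᵥ u)²`, and
averaging over `u` gives `𝔼 ε² ≤ (d + 1) ‖θ‖² ∑_{i ≠ j} (2 / (i + j + 1))²`. For fixed `i` the sum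
over `j` telescopes to at most `8 / (i + 1)`, so the total is at most `8 H_D ≤ 24 log D`.
-/

open MeasureTheory ProbabilityTheory Finset

section
variable {ι E M : Type*} [Fintype ι] [DecidableEq ι] [CommMonoid M]

lemma prod_mulSingle_apply (i : ι) (f : E → M) (x : ι → E) :
    ∏ m, (Pi.mulSingle i f : ι → E → M) m (x m) = f (x i) := by
  rw [prod_eq_single i (fun m _ hm => by simp [hm]) (by simp)]
  simp

lemma comp_eval_mul_comp_eval_eq_prod (i j : ι) (f g : E → M) (x : ι → E) :
    f (x i) * g (x j) = ∏ m, (Pi.mulSingle i f * Pi.mulSingle j g : ι → E → M) m (x m) := by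
  simp only [Pi.mul_apply, prod_mul_distrib, prod_mulSingle_apply]

end

section
variable {ι E : Type*} [Fintype ι] [DecidableEq ι] [MeasurableSpace E] {μ : Measure E}
  [IsProbabilityMeasure μ]

lemma integral_comp_eval_mul_comp_eval {i j : ι} (hij : i ≠ j) (f g : E → ℝ) :
    ∫ x, f (x i) * g (x j) ∂Measure.pi (fun _ : ι => μ) = (∫ y, f y ∂μ) * ∫ y, g y ∂μ := by
  simp_rw [comp_eval_mul_comp_eval_eq_prod i j, integral_fintype_prod_eq_prod]
  rw [Fintype.prod_eq_mul i j hij]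
  · simp [hij, hij.symm]
  · rintro m ⟨hmi, hmj⟩
    simp [hmi, hmj]

lemma integrable_comp_eval_mul_comp_eval {i j : ι} (hij : i ≠ j) {f g : E → ℝ}
    (hf : Integrable f μ) (hg : Integrable g μ) :
    Integrable (fun x => f (x i) * g (x j)) (Measure.pi fun _ : ι => μ) := by
  simp_rw [comp_eval_mul_comp_eval_eq_prod i j]
  refine Integrable.fintype_prod (μ := fun _ => μ) fun m => ?_
  by_cases hmi : m = i
  · subst hmi; simpa [hij] using hf
  by_cases hmj : m = j
  · subst hmj; simpa [hmi] using hg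
  simp only [Pi.mul_apply, Pi.mulSingle_eq_of_ne hmi, Pi.mulSingle_eq_of_ne hmj, mul_one]
  exact integrable_const 1

lemma memLp_comp_eval_mul_comp_eval {i j : ι} (hij : i ≠ j) {f g : E → ℝ}
    (hf : MemLp f 2 μ) (hg : MemLp g 2 μ) :
    MemLp (fun x => f (x i) * g (x j)) 2 (Measure.pi fun _ : ι => μ) := by
  refine (memLp_two_iff_integrable_sq ?_).2 ?_
  · exact (hf.1.comp_measurePreserving (measurePreserving_eval _ i)).mul
      (hg.1.comp_measurePreserving (measurePreserving_eval _ j))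
  · simpa only [mul_pow] using
      integrable_comp_eval_mul_comp_eval hij hf.integrable_sq hg.integrable_sq

lemma integral_pair_mul_pair {f g : E → ℝ} (hf : ∫ y, f y ∂μ = 0) (hg : ∫ y, g y ∂μ = 0)
    {i j k l : ι} (hij : i ≠ j) (hkl : k ≠ l) :
    ∫ x, f (x i) * g (x j) * (f (x k) * g (x l)) ∂Measure.pi (fun _ : ι => μ) =
      (if i = k ∧ j = l then (∫ y, f y ^ 2 ∂μ) * ∫ y, g y ^ 2 ∂μ else 0) +
        (if i = l ∧ j = k then (∫ y, f y * g y ∂μ) ^ 2 else 0) := by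
  by_cases hsame : i = k ∧ j = l
  · obtain ⟨rfl, rfl⟩ := hsame
    simp only [and_self, if_true, hij, false_and, if_false, add_zero]
    rw [← integral_comp_eval_mul_comp_eval hij (fun y => f y ^ 2) (fun y => g y ^ 2)]
    congr 1; funext x; ring
  by_cases hswap : i = l ∧ j = k
  · obtain ⟨rfl, rfl⟩ := hswap
    simp only [and_self, if_true, hij, false_and, if_false, zero_add]
    rw [sq, ← integral_comp_eval_mul_comp_eval hij (fun y => f y * g y) (fun y => f y * g y)]
    congr 1; funext x; ring
  rw [if_neg hsame, if_neg hswap, add_zero]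
  have hprod (x : ι → E) : f (x i) * g (x j) * (f (x k) * g (x l)) = ∏ m,
      (Pi.mulSingle i f * Pi.mulSingle j g * (Pi.mulSingle k f * Pi.mulSingle l g) :
        ι → E → ℝ) m (x m) := by
    simp only [Pi.mul_apply, prod_mul_distrib, prod_mulSingle_apply]
  simp_rw [hprod, integral_fintype_prod_eq_prod]
  by_cases hi : i ≠ k ∧ i ≠ l
  · refine prod_eq_zero (mem_univ i) ?_
    simp [hij, hi.1, hi.2, hf]
  · have hj : j ≠ k ∧ j ≠ l := by grind
    refine prod_eq_zero (mem_univ j) ?_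
    simp [hij.symm, hj.1, hj.2, hg]

def crossSum (w : ι → ι → ℝ) (f g : E → ℝ) (x : ι → E) : ℝ :=
  ∑ i, ∑ j, if i ≠ j then w i j * f (x i) * g (x j) else 0

variable {f g : E → ℝ}

lemma memLp_crossSum_term (w : ι → ι → ℝ) (hf : MemLp f 2 μ) (hg : MemLp g 2 μ) (i j : ι) :
    MemLp (fun x => if i ≠ j then w i j * f (x i) * g (x j) else 0) 2
      (Measure.pi fun _ : ι => μ) := by
  split_ifs with hij
  · simpa only [mul_assoc] using (memLp_comp_eval_mul_comp_eval hij hf hg).const_mul (w i j)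
  · exact memLp_const 0

lemma memLp_crossSum (w : ι → ι → ℝ) (hf : MemLp f 2 μ) (hg : MemLp g 2 μ) :
    MemLp (crossSum w f g) 2 (Measure.pi fun _ : ι => μ) :=
  memLp_finsetSum _ fun i _ => memLp_finsetSum _ fun j _ => memLp_crossSum_term w hf hg i j

lemma integral_crossSum (w : ι → ι → ℝ) (hf : MemLp f 2 μ) (hg : MemLp g 2 μ)
    (hf₀ : ∫ y, f y ∂μ = 0) :
    ∫ x, crossSum w f g x ∂Measure.pi (fun _ : ι => μ) = 0 := by
  have hterm (i j : ι) := (memLp_crossSum_term w hf hg i j).integrable one_le_two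
  unfold crossSum
  rw [integral_finsetSum _ fun i _ => integrable_finsetSum _ fun j _ => hterm i j]
  refine sum_eq_zero fun i _ => ?_
  rw [integral_finsetSum _ fun j _ => hterm i j]
  refine sum_eq_zero fun j _ => ?_
  split_ifs with hij
  · simp_rw [mul_assoc]
    rw [integral_const_mul, integral_comp_eval_mul_comp_eval hij, hf₀, zero_mul, mul_zero]
  · exact integral_zero _ _

lemma integral_comp_eval_mul_comp_eval_mul_crossSum (w : ι → ι → ℝ) (hf : MemLp f 2 μ)
    (hg : MemLp g 2 μ) (hf₀ : ∫ y, f y ∂μ = 0) (hg₀ : ∫ y, g y ∂μ = 0) {i j : ι} (hij : i ≠ j) :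
    ∫ x, f (x i) * g (x j) * crossSum w f g x ∂Measure.pi (fun _ : ι => μ) =
      w i j * ((∫ y, f y ^ 2 ∂μ) * ∫ y, g y ^ 2 ∂μ) + w j i * (∫ y, f y * g y ∂μ) ^ 2 := by
  have hterm (k l : ι) : Integrable (fun x => f (x i) * g (x j) *
      (if k ≠ l then w k l * f (x k) * g (x l) else 0)) (Measure.pi fun _ : ι => μ) :=
    (memLp_comp_eval_mul_comp_eval hij hf hg).integrable_mul (memLp_crossSum_term w hf hg k l)
  unfold crossSum
  simp_rw [mul_sum]
  rw [integral_finsetSum _ fun k _ => integrable_finsetSum _ fun l _ => hterm k l]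
  simp_rw [integral_finsetSum _ fun l _ => hterm _ l]
  have hterm_eq (k l : ι) : ∫ x, f (x i) * g (x j) *
      (if k ≠ l then w k l * f (x k) * g (x l) else 0) ∂Measure.pi (fun _ : ι => μ) =
      (if i = k ∧ j = l then w i j * ((∫ y, f y ^ 2 ∂μ) * ∫ y, g y ^ 2 ∂μ) else 0) +
        (if i = l ∧ j = k then w j i * (∫ y, f y * g y ∂μ) ^ 2 else 0) := by
    by_cases hkl : k ≠ l
    · calc _ = w k l * ∫ x, f (x i) * g (x j) * (f (x k) * g (x l))
            ∂Measure.pi (fun _ : ι => μ) := by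
            simp only [if_pos hkl]
            rw [← integral_const_mul]; congr 1; funext x; ring
        _ = _ := by
            rw [integral_pair_mul_pair hf₀ hg₀ hij hkl]
            split_ifs with h₁ h₂ h₂ <;> grind
    · obtain rfl : k = l := not_not.1 hkl
      have hdiag : ¬(i = k ∧ j = k) := fun h => hij (h.1.trans h.2.symm)
      simp [if_neg hdiag]
  simp_rw [hterm_eq]
  simp [sum_add_distrib, ite_and, sum_ite_eq]

lemma integral_crossSum_sq (w : ι → ι → ℝ) (hf : MemLp f 2 μ) (hg : MemLp g 2 μ)
    (hf₀ : ∫ y, f y ∂μ = 0) (hg₀ : ∫ y, g y ∂μ = 0) :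
    ∫ x, crossSum w f g x ^ 2 ∂Measure.pi (fun _ : ι => μ) =
      (∑ i, ∑ j, if i ≠ j then w i j ^ 2 else 0) * ((∫ y, f y ^ 2 ∂μ) * ∫ y, g y ^ 2 ∂μ) +
        (∑ i, ∑ j, if i ≠ j then w i j * w j i else 0) * (∫ y, f y * g y ∂μ) ^ 2 := by
  have hterm (i j : ι) : Integrable (fun x => (if i ≠ j then w i j * f (x i) * g (x j) else 0) *
      crossSum w f g x) (Measure.pi fun _ : ι => μ) :=
    (memLp_crossSum_term w hf hg i j).integrable_mul (memLp_crossSum w hf hg)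
  simp_rw [sq (crossSum w f g _)]
  conv_lhs => enter [2, x, 1]; unfold crossSum
  simp_rw [sum_mul]
  rw [integral_finsetSum _ fun i _ => integrable_finsetSum _ fun j _ => hterm i j]
  simp_rw [integral_finsetSum _ fun j _ => hterm _ j]
  have hterm_eq (i j : ι) : ∫ x, (if i ≠ j then w i j * f (x i) * g (x j) else 0) * crossSum w f g x
      ∂Measure.pi (fun _ : ι => μ) = if i ≠ j then
        w i j * (w i j * ((∫ y, f y ^ 2 ∂μ) * ∫ y, g y ^ 2 ∂μ) + w j i * (∫ y, f y * g y ∂μ) ^ 2)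
        else 0 := by
    split_ifs with hij
    · simp only [mul_assoc, integral_const_mul]
      simp only [← mul_assoc, integral_comp_eval_mul_comp_eval_mul_crossSum w hf hg hf₀ hg₀ hij]
    · simp
  simp only [← sum_add_distrib]
  refine sum_congr rfl fun i _ => sum_congr rfl fun j _ => ?_
  rw [hterm_eq]
  split_ifs <;> ring
end

lemma integral_sq_gaussianReal : ∫ x, x ^ 2 ∂gaussianReal 0 1 = 1 := by
  have h := variance_fun_id_gaussianReal (μ := 0) (v := 1)
  rw [variance_of_integral_eq_zero aemeasurable_id' integral_id_gaussianReal] at h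
  exact_mod_cast h

section
variable {κ : Type*} [Fintype κ]

local notation "γ" => Measure.pi fun _ : κ => gaussianReal 0 1

lemma memLp_eval_gaussian (p : ENNReal) (hp : p ≠ ⊤) (k : κ) :
    MemLp (fun y : κ → ℝ => y k) p γ :=
  (memLp_id_gaussianReal' p hp).comp_measurePreserving (measurePreserving_eval _ k)

lemma integrable_eval_mul_eval_gaussian (k l : κ) : Integrable (fun y : κ → ℝ => y k * y l) γ :=
  (memLp_eval_gaussian 2 ENNReal.ofNat_ne_top k).integrable_mul
    (memLp_eval_gaussian 2 ENNReal.ofNat_ne_top l)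

lemma integral_eval_mul_eval_gaussian [DecidableEq κ] (k l : κ) :
    ∫ y, y k * y l ∂γ = if k = l then 1 else 0 := by
  split_ifs with hkl
  · subst hkl
    simp_rw [← sq]
    rw [integral_comp_eval (μ := fun _ : κ => gaussianReal 0 1) (f := fun x : ℝ => x ^ 2)
      (by fun_prop), integral_sq_gaussianReal]
  · simpa [integral_id_gaussianReal] using
      integral_comp_eval_mul_comp_eval (μ := gaussianReal 0 1) hkl (fun x => x) (fun x => x)

lemma memLp_dotProduct_gaussian (p : ENNReal) (hp : p ≠ ⊤) (a : κ → ℝ) :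
    MemLp (fun y => a ⬝ᵥ y) p γ :=
  memLp_finsetSum _ fun k _ => (memLp_eval_gaussian p hp k).const_mul (a k)

lemma integral_dotProduct_gaussian (a : κ → ℝ) : ∫ y, a ⬝ᵥ y ∂γ = 0 := by
  unfold dotProduct
  rw [integral_finsetSum _ fun k _ =>
    ((memLp_eval_gaussian 1 ENNReal.one_ne_top k).integrable le_rfl).const_mul (a k)]
  simp [integral_const_mul, integral_eval, integral_id_gaussianReal]

lemma integral_dotProduct_mul_dotProduct_gaussian (a b : κ → ℝ) :
    ∫ y, (a ⬝ᵥ y) * (b ⬝ᵥ y) ∂γ = a ⬝ᵥ b := by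
  classical
  have hint (k l : κ) : Integrable (fun y : κ → ℝ => a k * b l * (y k * y l)) γ :=
    (integrable_eval_mul_eval_gaussian k l).const_mul _
  simp_rw [dotProduct, sum_mul_sum, mul_mul_mul_comm (a _)]
  rw [integral_finsetSum _ fun k _ => integrable_finsetSum _ fun l _ => hint k l]
  simp_rw [integral_finsetSum _ fun l _ => hint _ l, integral_const_mul,
    integral_eval_mul_eval_gaussian]
  simp

lemma integral_dotProduct_self_gaussian : ∫ y, y ⬝ᵥ y ∂γ = Fintype.card κ := by
  classical
  simp_rw [dotProduct]
  rw [integral_finsetSum _ fun k _ => integrable_eval_mul_eval_gaussian k k]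
  simp [integral_eval_mul_eval_gaussian]

lemma integrable_dotProduct_self_gaussian : Integrable (fun y : κ → ℝ => y ⬝ᵥ y) γ :=
  integrable_finsetSum _ fun k _ => integrable_eval_mul_eval_gaussian k k

variable {ι : Type*} [Fintype ι] [DecidableEq ι] (w : ι → ι → ℝ) (θ : κ → ℝ)

lemma integral_crossSum_dotProduct_sq_gaussian (u : κ → ℝ) :
    ∫ x, crossSum w (θ ⬝ᵥ ·) (· ⬝ᵥ u) x ^ 2 ∂Measure.pi (fun _ : ι => γ) =
      (∑ i, ∑ j, if i ≠ j then w i j ^ 2 else 0) * ((θ ⬝ᵥ θ) * (u ⬝ᵥ u)) +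
        (∑ i, ∑ j, if i ≠ j then w i j * w j i else 0) * (θ ⬝ᵥ u) ^ 2 := by
  simp_rw [dotProduct_comm _ u]
  rw [integral_crossSum_sq w (memLp_dotProduct_gaussian 2 ENNReal.ofNat_ne_top θ)
    (memLp_dotProduct_gaussian 2 ENNReal.ofNat_ne_top u) (integral_dotProduct_gaussian θ)
    (integral_dotProduct_gaussian u)]
  simp_rw [sq, integral_dotProduct_mul_dotProduct_gaussian, dotProduct_comm u θ]

lemma memLp_crossSum_dotProduct_gaussian (u : κ → ℝ) :
    MemLp (crossSum w (θ ⬝ᵥ ·) (· ⬝ᵥ u)) 2 (Measure.pi fun _ : ι => γ) := by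
  simp_rw [dotProduct_comm _ u]
  exact memLp_crossSum w (memLp_dotProduct_gaussian 2 ENNReal.ofNat_ne_top θ)
    (memLp_dotProduct_gaussian 2 ENNReal.ofNat_ne_top u)

lemma integral_crossSum_dotProduct_gaussian (u : κ → ℝ) :
    ∫ x, crossSum w (θ ⬝ᵥ ·) (· ⬝ᵥ u) x ∂Measure.pi (fun _ : ι => γ) = 0 := by
  simp_rw [dotProduct_comm _ u]
  exact integral_crossSum w (memLp_dotProduct_gaussian 2 ENNReal.ofNat_ne_top θ)
    (memLp_dotProduct_gaussian 2 ENNReal.ofNat_ne_top u) (integral_dotProduct_gaussian θ)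

def crossTerm (p : (ι → κ → ℝ) × (κ → ℝ)) : ℝ := crossSum w (θ ⬝ᵥ ·) (· ⬝ᵥ p.2) p.1

lemma continuous_crossTerm : Continuous (crossTerm w θ) := by
  refine continuous_finsetSum _ fun i _ => continuous_finsetSum _ fun j _ => ?_
  split_ifs
  · simp only [dotProduct]; fun_prop
  · exact continuous_const

lemma integrable_crossTerm_sq :
    Integrable (fun p => crossTerm w θ p ^ 2) ((Measure.pi fun _ : ι => γ).prod γ) := by
  refine (integrable_prod_iff' ((continuous_crossTerm w θ).pow 2).aestronglyMeasurable).2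
    ⟨ae_of_all _ fun u => (memLp_crossSum_dotProduct_gaussian w θ u).integrable_sq, ?_⟩
  simp_rw [Pi.pow_apply, norm_pow, Real.norm_eq_abs, sq_abs]
  simp_rw [crossTerm, integral_crossSum_dotProduct_sq_gaussian]
  exact (integrable_dotProduct_self_gaussian.const_mul _).const_mul _ |>.add
    ((memLp_dotProduct_gaussian 2 ENNReal.ofNat_ne_top θ).integrable_sq.const_mul _)

lemma integral_crossTerm : ∫ p, crossTerm w θ p ∂(Measure.pi fun _ : ι => γ).prod γ = 0 := by
  have hint := (memLp_two_iff_integrable_sq (continuous_crossTerm w θ).aestronglyMeasurable).2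
    (integrable_crossTerm_sq w θ) |>.integrable one_le_two
  rw [integral_prod_symm _ hint]
  simp [crossTerm, integral_crossSum_dotProduct_gaussian]

lemma integral_crossTerm_sq :
    ∫ p, crossTerm w θ p ^ 2 ∂(Measure.pi fun _ : ι => γ).prod γ =
      (∑ i, ∑ j, if i ≠ j then w i j ^ 2 else 0) * ((θ ⬝ᵥ θ) * Fintype.card κ) +
        (∑ i, ∑ j, if i ≠ j then w i j * w j i else 0) * (θ ⬝ᵥ θ) := by
  rw [integral_prod_symm _ (integrable_crossTerm_sq w θ)]
  simp_rw [crossTerm, integral_crossSum_dotProduct_sq_gaussian]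
  rw [integral_add, integral_const_mul, integral_const_mul, integral_const_mul,
    integral_dotProduct_self_gaussian]
  · simp_rw [sq, integral_dotProduct_mul_dotProduct_gaussian]
  · exact (integrable_dotProduct_self_gaussian.const_mul _).const_mul _
  · exact (memLp_dotProduct_gaussian 2 ENNReal.ofNat_ne_top θ).integrable_sq.const_mul _
end

lemma sum_range_two_div_sq_le (m n : ℕ) :
    ∑ j ∈ range n, (2 / ((m : ℝ) + j + 1)) ^ 2 ≤ 8 / ((m : ℝ) + 1) := by
  have hterm (j : ℕ) : (2 / ((m : ℝ) + j + 1)) ^ 2 ≤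
      8 / ((m : ℝ) + j + 1) - 8 / ((m : ℝ) + (j + 1 : ℕ) + 1) := by
    have hx : (1 : ℝ) ≤ m + j + 1 := by
      linarith [(m.cast_nonneg : (0 : ℝ) ≤ m), (j.cast_nonneg : (0 : ℝ) ≤ j)]
    push_cast
    rw [div_pow, div_sub_div _ _ (by linarith) (by linarith),
      div_le_div_iff₀ (by positivity) (by positivity)]
    nlinarith
  calc _ ≤ ∑ j ∈ range n, (8 / ((m : ℝ) + j + 1) - 8 / ((m : ℝ) + (j + 1 : ℕ) + 1)) :=
        sum_le_sum fun j _ => hterm j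
    _ = 8 / (m + 1) - 8 / ((m : ℝ) + n + 1) := by
        rw [sum_range_sub' (fun j : ℕ => 8 / ((m : ℝ) + j + 1))]; simp
    _ ≤ 8 / (m + 1) := sub_le_self _ (by positivity)

lemma sum_inv_succ_eq_harmonic (D : ℕ) : ∑ i : Fin D, 1 / ((i : ℕ) + 1 : ℝ) = harmonic D := by
  rw [Fin.sum_univ_eq_sum_range (fun i => 1 / ((i : ℝ) + 1)), harmonic]
  push_cast
  simp

lemma sum_offDiag_two_div_sq_le_log (D : ℕ) :
    ∑ i : Fin D, ∑ j : Fin D, (if i ≠ j then (2 / ((i : ℕ) + (j : ℕ) + 1 : ℝ)) ^ 2 else 0) ≤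
      24 * Real.log D := by
  rcases lt_or_ge D 2 with hD | hD
  · have hdiag (i j : Fin D) : i = j := Fin.ext (by omega)
    rw [sum_eq_zero fun i _ => sum_eq_zero fun j _ => if_neg (not_not.2 (hdiag i j))]
    exact mul_nonneg (by norm_num) (Real.log_natCast_nonneg D)
  calc _ ≤ ∑ i : Fin D, ∑ j : Fin D, (2 / ((i : ℕ) + (j : ℕ) + 1 : ℝ)) ^ 2 :=
        sum_le_sum fun i _ => sum_le_sum fun j _ => by split_ifs; exacts [le_rfl, by positivity]
    _ ≤ ∑ i : Fin D, 8 * (1 / ((i : ℕ) + 1 : ℝ)) := sum_le_sum fun i _ => by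
        rw [Fin.sum_univ_eq_sum_range (fun j => (2 / ((i : ℕ) + (j : ℝ) + 1)) ^ 2),
          ← div_eq_mul_one_div]
        exact sum_range_two_div_sq_le i D
    _ ≤ 8 * (1 + Real.log D) := by
        rw [← mul_sum, sum_inv_succ_eq_harmonic]
        gcongr
        exact harmonic_le_one_add_log D
    _ ≤ 24 * Real.log D := by
        have h2 : Real.log 2 ≤ Real.log D := Real.log_le_log two_pos (by exact_mod_cast hD)
        linarith [Real.log_two_gt_d9]

lemma mul_le_mul_of_abs_le {x y a b : ℝ} (hx : |x| ≤ a) (hy : |y| ≤ b) : x * y ≤ a * b :=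
  (le_abs_self _).trans <| (abs_mul x y).trans_le <|
    mul_le_mul hx hy (abs_nonneg _) ((abs_nonneg _).trans hx)

section
variable {ι : Type*} [Fintype ι] [DecidableEq ι] {w b : ι → ι → ℝ}

lemma sum_offDiag_sq_le (hw : ∀ i j, |w i j| ≤ b i j) :
    ∑ i, ∑ j, (if i ≠ j then w i j ^ 2 else 0) ≤ ∑ i, ∑ j, if i ≠ j then b i j ^ 2 else 0 :=
  sum_le_sum fun i _ => sum_le_sum fun j _ => by
    split_ifs
    · simpa only [sq] using mul_le_mul_of_abs_le (hw i j) (hw i j)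
    · exact le_rfl

lemma sum_offDiag_mul_swap_le (hw : ∀ i j, |w i j| ≤ b i j) (hb : ∀ i j, b j i = b i j) :
    ∑ i, ∑ j, (if i ≠ j then w i j * w j i else 0) ≤ ∑ i, ∑ j, if i ≠ j then b i j ^ 2 else 0 :=
  sum_le_sum fun i _ => sum_le_sum fun j _ => by
    split_ifs
    · simpa only [sq, hb] using mul_le_mul_of_abs_le (hw i j) (hw j i)
    · exact le_rfl

end

lemma weight_le_two_div (a b : ℕ) :
    2 / (2 * (min a b + 1 : ℝ) + (max a b + 1 : ℝ) - 2) ≤ 2 / ((a : ℝ) + b + 1) := by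
  refine div_le_div_of_nonneg_left zero_le_two (by positivity) ?_
  have := min_add_max (a : ℝ) b
  have : (0 : ℝ) ≤ min (a : ℝ) b := le_min a.cast_nonneg b.cast_nonneg
  push_cast
  linarith

lemma card_add_one_mul_dotProduct_self_le {κ : Type*} [Fintype κ] {θ : κ → ℝ}
    (hθ : θ ⬝ᵥ θ ≤ 1) : ((Fintype.card κ : ℝ) + 1) * (θ ⬝ᵥ θ) ≤ 2 * Fintype.card κ := by
  rcases (Fintype.card κ).eq_zero_or_pos with h | h
  · have := Fintype.card_eq_zero_iff.1 h
    simp [dotProduct]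
  · have : (1 : ℝ) ≤ Fintype.card κ := by exact_mod_cast h
    have : 0 ≤ θ ⬝ᵥ θ := sum_nonneg fun k _ => mul_self_nonneg (θ k)
    nlinarith

/-- With `x_1, …, x_D, x_q` i.i.d. `N(0, I_d)`, `‖θ‖ ≤ 1`, and
`ε = ∑_{i ≠ j} w_{ij} (θᵀx_i)(x_jᵀx_q)` where (1-indexed)
`|w_{ij}| ≤ 2/(2 min(i,j) + max(i,j) - 2)`, one has `𝔼 ε = 0` and
`𝔼 ε² ≤ C d log D` for an absolute constant `C`. -/
theorem cross_term_mean_zero_and_variance_bound :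
    ∃ C > (0 : ℝ), ∀ (d D : ℕ) (θ : Fin d → ℝ), (∑ k, θ k ^ 2) ≤ 1 →
      ∀ w : Fin D → Fin D → ℝ,
        (∀ i j : Fin D, |w i j| ≤
          2 / (2 * (min (i : ℕ) (j : ℕ) + 1 : ℝ) + (max (i : ℕ) (j : ℕ) + 1 : ℝ) - 2)) →
        (∫ p : (Fin D → Fin d → ℝ) × (Fin d → ℝ),
            (∑ i : Fin D, ∑ j : Fin D, if i ≠ j then
                w i j * (∑ k, θ k * p.1 i k) * (∑ k, p.1 j k * p.2 k) else 0)
          ∂((Measure.pi fun _ : Fin D => Measure.pi fun _ : Fin d => gaussianReal 0 1).prod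
              (Measure.pi fun _ : Fin d => gaussianReal 0 1)) = 0) ∧
        (∫ p : (Fin D → Fin d → ℝ) × (Fin d → ℝ),
            (∑ i : Fin D, ∑ j : Fin D, if i ≠ j then
                w i j * (∑ k, θ k * p.1 i k) * (∑ k, p.1 j k * p.2 k) else 0) ^ 2
          ∂((Measure.pi fun _ : Fin D => Measure.pi fun _ : Fin d => gaussianReal 0 1).prod
              (Measure.pi fun _ : Fin d => gaussianReal 0 1)) ≤ C * d * Real.log D) := by
  refine ⟨48, by norm_num, fun d D θ hθ w hw => ⟨integral_crossTerm w θ, ?_⟩⟩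
  have hS : θ ⬝ᵥ θ ≤ 1 := by simpa only [dotProduct, sq] using hθ
  have hS₀ : 0 ≤ θ ⬝ᵥ θ := sum_nonneg fun k _ => mul_self_nonneg (θ k)
  set B := ∑ i : Fin D, ∑ j : Fin D, if i ≠ j then (2 / ((i : ℕ) + (j : ℕ) + 1 : ℝ)) ^ 2 else 0
  have hwb (i j : Fin D) : |w i j| ≤ 2 / ((i : ℕ) + (j : ℕ) + 1 : ℝ) :=
    (hw i j).trans (weight_le_two_div i j)
  have hsym (i j : Fin D) :
      2 / ((j : ℕ) + (i : ℕ) + 1 : ℝ) = 2 / ((i : ℕ) + (j : ℕ) + 1 : ℝ) := by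
    rw [add_comm ((j : ℕ) : ℝ)]
  calc _ = (∑ i, ∑ j, if i ≠ j then w i j ^ 2 else 0) * ((θ ⬝ᵥ θ) * d) +
        (∑ i, ∑ j, if i ≠ j then w i j * w j i else 0) * (θ ⬝ᵥ θ) := by
        exact (integral_crossTerm_sq w θ).trans (by simp only [Fintype.card_fin])
    _ ≤ B * ((θ ⬝ᵥ θ) * d) + B * (θ ⬝ᵥ θ) := by
        gcongr
        · exact sum_offDiag_sq_le hwb
        · exact sum_offDiag_mul_swap_le hwb hsym
    _ = B * (((Fintype.card (Fin d) : ℝ) + 1) * (θ ⬝ᵥ θ)) := by simp only [Fintype.card_fin]; ring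
    _ ≤ (24 * Real.log D) * (2 * Fintype.card (Fin d)) :=
        mul_le_mul (sum_offDiag_two_div_sq_le_log D) (card_add_one_mul_dotProduct_self_le hS)
          (by positivity) (mul_nonneg (by norm_num) (Real.log_natCast_nonneg D))
    _ = 48 * d * Real.log D := by simp only [Fintype.card_fin]; ring
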